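/- arXiv:2407.05776 — 7 statements merged into one kernel-verified Lean document; each statement's English description precedes it below -/
import Mathlib

section
/- Let X be a topological space and let W ⊆ X × X be open; for x ∈ X set W_x = {y ∈ X : (x,y) ∈ W}. Then the map X × F(X) → F(X), (x,F) ↦ closure of (W_x ∩ F), is continuous, where F(X) carries the lower topology (and X × F(X) the product of the topology of X with the lower topology). -/
/-!
The closure of a set meets an open `U` iff the set itself does, so the preimage of the
subbasic set `I_U` is `{(x, F) | W_x ∩ F ∩ U ≠ ∅}`; replacing `W` by `W ∩ (X × U)` we may take
`U = X`. If `y ∈ W_x ∩ F`, a box `V × N ⊆ W` around `(x, y)` gives the neighbourhood `V × I_N`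
of `(x, F)`, on which the section still meets the closed set.
-/

open TopologicalSpace Set

/-- The lower topology on the space `F(X)` of closed subsets of a topological space `X`,
generated by the sets `I_U = {F : F(X) | F ∩ U ≠ ∅}` for `U` open in `X`. -/
def lowerTop (X : Type*) [TopologicalSpace X] : TopologicalSpace (Closeds X) :=
  TopologicalSpace.generateFrom
    {S : Set (Closeds X) |
      ∃ U : Set X, IsOpen U ∧ S = {F : Closeds X | ((F : Set X) ∩ U).Nonempty}}

namespace lowerTop

variable {X : Type*} [TopologicalSpace X]

attribute [local instance] lowerTop

theorem isOpen_inter_nonempty {U : Set X} (hU : IsOpen U) :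
    IsOpen {F : Closeds X | ((F : Set X) ∩ U).Nonempty} :=
  isOpen_generateFrom_of_mem ⟨U, hU, rfl⟩

theorem continuous_iff {Y : Type*} [TopologicalSpace Y] {f : Y → Closeds X} :
    Continuous f ↔ ∀ U : Set X, IsOpen U → IsOpen {y | ((f y : Set X) ∩ U).Nonempty} := by
  refine continuous_generateFrom_iff.trans ⟨fun h U hU => h _ ⟨U, hU, rfl⟩, ?_⟩
  rintro h _ ⟨U, hU, rfl⟩
  exact h U hU

theorem isOpen_setOf_inter_nonempty {W : Set (X × X)} (hW : IsOpen W) :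
    IsOpen {p : X × Closeds X | ({y | (p.1, y) ∈ W} ∩ (p.2 : Set X)).Nonempty} := by
  refine isOpen_iff_forall_mem_open.2 ?_
  rintro ⟨x, F⟩ ⟨y, hxyW, hyF⟩
  obtain ⟨V, N, hV, hN, hxV, hyN, hVN⟩ := isOpen_prod_iff.1 hW x y hxyW
  refine ⟨V ×ˢ {G : Closeds X | ((G : Set X) ∩ N).Nonempty}, ?_,
    hV.prod (isOpen_inter_nonempty hN), hxV, y, hyF, hyN⟩
  rintro ⟨x', G⟩ ⟨hx'V, z, hzG, hzN⟩
  exact ⟨z, hVN (mk_mem_prod hx'V hzN), hzG⟩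

end lowerTop

/-- For `W ⊆ X × X` open, with `W_x = {y | (x, y) ∈ W}`, the map
`(x, F) ↦ closure (W_x ∩ F)` is continuous from `X × F(X)` (product of the topology of `X`
with the lower topology) to `F(X)` with the lower topology. -/
theorem continuous_closure_inter_fattening
    {X : Type*} [TopologicalSpace X] (W : Set (X × X)) (hW : IsOpen W) :
    @Continuous (X × Closeds X) (Closeds X)
      (@instTopologicalSpaceProd X (Closeds X) _ (lowerTop X)) (lowerTop X)
      (fun p => ⟨closure ({y : X | (p.1, y) ∈ W} ∩ (p.2 : Set X)), isClosed_closure⟩) := by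
  let := lowerTop X
  refine lowerTop.continuous_iff.2 fun U hU => ?_
  simp only [Closeds.coe_mk, closure_inter_open_nonempty_iff hU]
  convert lowerTop.isOpen_setOf_inter_nonempty (hW.inter (isOpen_univ.prod hU)) using 4 with p
  ext y
  simp only [mem_inter_iff, mem_ofPred_eq, mem_prod, mem_univ, true_and]
  tauto
end

section
/- Let (X,d) be a metric space. Then the topology induced by the lower topology on the set F*(X) of nonempty closed subsets of X equals the coarsest topology on F*(X) making the map F ↦ d(x,F) upper semicontinuous for every x ∈ X, where d(x,F) = inf_{y ∈ F} d(x,y). -/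
open TopologicalSpace Set

/-- The set `F*(X)` of nonempty closed subsets of `X`. -/
abbrev NClosed (X : Type*) [TopologicalSpace X] := {F : Set X // IsClosed F ∧ F.Nonempty}

/-- The topology on `F*(X)` induced by the lower topology on `F(X)`. -/
def lowerTopN (X : Type*) [TopologicalSpace X] : TopologicalSpace (NClosed X) :=
  TopologicalSpace.induced (fun F : NClosed X => (⟨F.1, F.2.1⟩ : Closeds X)) (lowerTop X)

open Metric Topology

/- Both topologies are generated by "hitting" sets: the lower topology by
`{F | F ∩ U ≠ ∅}` for `U` open, the usc topology by `{F | d(x, F) < r}`. For nonempty `F`,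
`d(x, F) < r` says exactly that `F` meets the ball `B(x, r)`, and `F` meets an open `U` iff it
meets some ball inside `U`, so each family of subbasic sets is open for the other topology. -/

section PseudoMetric

variable {X : Type*} [PseudoMetricSpace X] {s : Set X}

theorem Metric.inter_ball_nonempty_iff_infDist_lt (hs : s.Nonempty) (x : X) (r : ℝ) :
    (s ∩ ball x r).Nonempty ↔ infDist x s < r := by
  simp only [infDist_lt_iff hs, Set.Nonempty, mem_inter_iff, mem_ball, dist_comm]

theorem Metric.inter_nonempty_iff_exists_infDist_lt (hs : s.Nonempty) {U : Set X}
    (hU : IsOpen U) : (s ∩ U).Nonempty ↔ ∃ x r, ball x r ⊆ U ∧ infDist x s < r := by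
  constructor
  · rintro ⟨z, hzs, hzU⟩
    obtain ⟨r, hr, hball⟩ := Metric.isOpen_iff.1 hU z hzU
    exact ⟨z, r, hball, by rwa [infDist_zero_of_mem hzs]⟩
  · rintro ⟨x, r, hball, hd⟩
    exact ((inter_ball_nonempty_iff_infDist_lt hs x r).2 hd).mono (inter_subset_inter_right _ hball)

end PseudoMetric

section LowerTopology

variable {X : Type*}

theorem lowerTopN_eq_generateFrom [TopologicalSpace X] :
    lowerTopN X = generateFrom
      {S | ∃ U : Set X, IsOpen U ∧ S = {F : NClosed X | (F.1 ∩ U).Nonempty}} := by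
  rw [lowerTopN, lowerTop, induced_generateFrom_eq]
  congr 1
  ext S
  constructor
  · rintro ⟨_, ⟨U, hU, rfl⟩, rfl⟩
    exact ⟨U, hU, rfl⟩
  · rintro ⟨U, hU, rfl⟩
    exact ⟨_, ⟨U, hU, rfl⟩, rfl⟩

theorem isOpen_lowerTopN_hitting [TopologicalSpace X] {U : Set X} (hU : IsOpen U) :
    IsOpen[lowerTopN X] {F : NClosed X | (F.1 ∩ U).Nonempty} := by
  rw [lowerTopN_eq_generateFrom]
  exact GenerateOpen.basic _ ⟨U, hU, rfl⟩

theorem hitting_eq_iUnion_infDist_lt [PseudoMetricSpace X] {U : Set X} (hU : IsOpen U) :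
    {F : NClosed X | (F.1 ∩ U).Nonempty}
      = ⋃ (x : X) (r : ℝ) (_ : ball x r ⊆ U), {F | infDist x F.1 < r} := by
  ext F
  simp only [mem_ofPred_eq, mem_iUnion, exists_prop, inter_nonempty_iff_exists_infDist_lt F.2.2 hU]

theorem preimage_infDist_Iio_eq_hitting [PseudoMetricSpace X] (x : X) (r : ℝ) :
    (fun F : NClosed X => infDist x F.1) ⁻¹' Iio r = {F | (F.1 ∩ ball x r).Nonempty} := by
  ext F
  exact (inter_ball_nonempty_iff_infDist_lt F.2.2 x r).symm

end LowerTopology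

/-- For a metric space `(X, d)`, the topology induced by the lower topology on the set `F*(X)`
of nonempty closed subsets of `X` is the coarsest topology making `F ↦ d(x, F)` upper
semicontinuous for every `x ∈ X`: it makes every such map upper semicontinuous, and every
topology making all these maps upper semicontinuous refines it. -/
theorem lowerTopN_eq_coarsest_usc (X : Type*) [MetricSpace X] :
    (∀ x : X, @UpperSemicontinuous (NClosed X) ℝ (lowerTopN X) _
        (fun F : NClosed X => Metric.infDist x F.1)) ∧
    (∀ t : TopologicalSpace (NClosed X),
      (∀ x : X, @UpperSemicontinuous (NClosed X) ℝ t _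
          (fun F : NClosed X => Metric.infDist x F.1)) →
      ∀ S : Set (NClosed X), @IsOpen _ (lowerTopN X) S → @IsOpen _ t S) := by
  refine ⟨fun x => ?_, fun t ht => ?_⟩
  · let := lowerTopN X
    refine upperSemicontinuous_iff_isOpen_preimage.2 fun r => ?_
    rw [preimage_infDist_Iio_eq_hitting]
    exact isOpen_lowerTopN_hitting isOpen_ball
  · suffices t ≤ lowerTopN X from fun S hS => this S hS
    rw [lowerTopN_eq_generateFrom]
    refine le_generateFrom ?_
    rintro _ ⟨U, hU, rfl⟩
    rw [hitting_eq_iUnion_infDist_lt (X := X) hU]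
    exact isOpen_iUnion fun x => isOpen_iUnion fun r => isOpen_iUnion fun _ =>
      (ht x).isOpen_preimage r
end

section
/- Let E be a normed complex vector space and fix x ∈ E. Then the map F ↦ ρ_F(x) is continuous on F((E*)_1) for the Vietoris topology, where (E*)_1 carries the weak-* topology (under which it is compact Hausdorff). -/
open TopologicalSpace Set

/-- Subbasis for the lower topology on closed subsets. -/
def lowerSets (X : Type*) [TopologicalSpace X] : Set (Set (Closeds X)) :=
  {S : Set (Closeds X) |
    ∃ U : Set X, IsOpen U ∧ S = {F : Closeds X | ((F : Set X) ∩ U).Nonempty}}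

/-- Subbasis for the upper Vietoris topology on closed subsets. -/
def upperSets (X : Type*) [TopologicalSpace X] : Set (Set (Closeds X)) :=
  {S : Set (Closeds X) | ∃ U : Set X, IsOpen U ∧ S = {F : Closeds X | (F : Set X) ⊆ U}}

/-- The Vietoris topology: the join of the lower topology and the upper Vietoris topology. -/
def vietTop (X : Type*) [TopologicalSpace X] : TopologicalSpace (Closeds X) :=
  TopologicalSpace.generateFrom (lowerSets X ∪ upperSets X)

variable (E : Type*) [NormedAddCommGroup E] [NormedSpace ℂ E]

/-- The closed unit ball `(E*)_1` of the dual of `E`, inside the dual equipped with the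
weak-* topology. -/
def dualBall : Set (WeakDual ℂ E) := {ω : WeakDual ℂ E | ∀ x : E, ‖ω x‖ ≤ ‖x‖}

/-- For a weak-* closed subset `F` of `(E*)_1`, `ρ_F x = sup_{ω ∈ F} |ω x|`
(with `ρ_∅ x = 0`, which holds by the convention `sSup ∅ = 0` in `ℝ`). -/
noncomputable def rho (F : Closeds (dualBall E)) (x : E) : ℝ :=
  sSup ((fun ω : dualBall E => ‖(ω : WeakDual ℂ E) x‖) '' (F : Set (dualBall E)))

/-! `ρ_F(x) > a` iff `F` meets the open set `{ω | a < ‖ω x‖}`, a lower Vietoris condition. By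
Banach–Alaoglu `F` is compact, so the supremum is attained and `ρ_F(x) < a` iff
`F ⊆ {ω | ‖ω x‖ < a}`, an upper Vietoris condition. The junk value `sSup ∅ = 0` does not
spoil this, because `∅` is an isolated point of the Vietoris topology. -/

open Topology

section sSupImage

variable {X : Type*} [TopologicalSpace X] {s : Set X} {f : X → ℝ} {a : ℝ}

lemma IsCompact.lt_sSup_image_iff (hs : IsCompact s) (hf : ContinuousOn f s) :
    a < sSup (f '' s) ↔ (∃ x ∈ s, a < f x) ∨ (s = ∅ ∧ a < 0) := by
  rcases s.eq_empty_or_nonempty with rfl | hne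
  · simp
  · rw [lt_csSup_iff (hs.bddAbove_image hf) (hne.image f)]
    simp [hne.ne_empty]

lemma IsCompact.sSup_image_lt_iff (hs : IsCompact s) (hf : ContinuousOn f s) :
    sSup (f '' s) < a ↔ (∀ x ∈ s, f x < a) ∧ (s.Nonempty ∨ 0 < a) := by
  rcases s.eq_empty_or_nonempty with rfl | hne
  · simp
  · obtain ⟨y, hys, hy⟩ := hs.exists_sSup_image_eq hne hf
    refine ⟨fun h => ⟨fun x hx => ?_, Or.inl hne⟩, fun h => hy ▸ h.1 y hys⟩
    exact (le_csSup (hs.bddAbove_image hf) (mem_image_of_mem f hx)).trans_lt h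

end sSupImage

section Vietoris

variable {X : Type*} [TopologicalSpace X]

lemma isOpen_vietTop_setOf_inter_nonempty {U : Set X} (hU : IsOpen U) :
    IsOpen[vietTop X] {F : Closeds X | ((F : Set X) ∩ U).Nonempty} :=
  isOpen_generateFrom_of_mem (Or.inl ⟨U, hU, rfl⟩)

lemma isOpen_vietTop_setOf_subset {U : Set X} (hU : IsOpen U) :
    IsOpen[vietTop X] {F : Closeds X | (F : Set X) ⊆ U} :=
  isOpen_generateFrom_of_mem (Or.inr ⟨U, hU, rfl⟩)

theorem continuous_vietTop_sSup_image [CompactSpace X] {f : X → ℝ} (hf : Continuous f) :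
    Continuous[vietTop X, _] fun F : Closeds X => sSup (f '' F) := by
  let := vietTop X
  refine OrderTopology.continuous_iff.2 fun a => ⟨?_, ?_⟩
  · have : (fun F : Closeds X => sSup (f '' F)) ⁻¹' Ioi a =
        {F : Closeds X | ((F : Set X) ∩ f ⁻¹' Ioi a).Nonempty} ∪
          ({F : Closeds X | (F : Set X) ⊆ ∅} ∩ {_F | a < 0}) := by
      ext F
      simp [F.isClosed.isCompact.lt_sSup_image_iff hf.continuousOn, Set.Nonempty]
    rw [this]
    exact (isOpen_vietTop_setOf_inter_nonempty (isOpen_Ioi.preimage hf)).union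
      ((isOpen_vietTop_setOf_subset isOpen_empty).inter isOpen_const)
  · have : (fun F : Closeds X => sSup (f '' F)) ⁻¹' Iio a =
        {F : Closeds X | (F : Set X) ⊆ f ⁻¹' Iio a} ∩
          ({F : Closeds X | ((F : Set X) ∩ univ).Nonempty} ∪ {_F | 0 < a}) := by
      ext F
      simp [F.isClosed.isCompact.sSup_image_lt_iff hf.continuousOn, subset_def]
    rw [this]
    exact (isOpen_vietTop_setOf_subset (isOpen_Iio.preimage hf)).inter
      ((isOpen_vietTop_setOf_inter_nonempty isOpen_univ).union isOpen_const)

end Vietoris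

lemma dualBall_eq_preimage_closedBall :
    dualBall E = WeakDual.toStrongDual ⁻¹' Metric.closedBall 0 1 := by
  ext ω
  simp [dualBall, ContinuousLinearMap.opNorm_le_iff zero_le_one]

instance : CompactSpace (dualBall E) :=
  isCompact_iff_compactSpace.mp <|
    dualBall_eq_preimage_closedBall E ▸ WeakDual.isCompact_closedBall 0 1

/-- For a fixed `x ∈ E`, the map `F ↦ ρ_F(x)` is continuous on the closed subsets of the
weak-* compact unit ball `(E*)_1`, endowed with the Vietoris topology. -/
theorem continuous_rho_apply (x : E) :
    @Continuous (Closeds (dualBall E)) ℝ (vietTop (dualBall E)) _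
      (fun F : Closeds (dualBall E) => rho E F x) :=
  continuous_vietTop_sSup_image ((WeakDual.eval_continuous x).comp continuous_subtype_val).norm
end

section
/- Let E be a normed complex vector space. The set F_conv^bal((E*)_1) of all weak-* closed, convex, balanced subsets of the closed unit ball (E*)_1 of the dual E* is closed in F((E*)_1) for the Vietoris topology; consequently F_conv^bal((E*)_1) is a compact Hausdorff space for the induced Vietoris topology. -/
open TopologicalSpace Set

/-! If `f (a, b) ∉ g '' F` for some `a, b ∈ F`, where `f` and `g` are continuous maps into a
Hausdorff space and `F` is closed in a compact space, separate `f (a, b)` from the compact set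
`g '' F` by disjoint open sets `u` and `v`, and pick a box `A ×ˢ B ∋ (a, b)` inside `f ⁻¹' u`.
Every closed set meeting `A` and `B` and contained in `g ⁻¹' v` then violates the same condition,
so the closed sets with `f (F ×ˢ F) ⊆ g '' F` form a Vietoris-closed family. Convexity and
balancedness of `Subtype.val '' F` are intersections of such conditions. Compactness and the
Hausdorff property come from identifying the closed subsets of a compact Hausdorff space with its
compact subsets, whose Vietoris topology is known to be compact Hausdorff. -/

open Topology

attribute [local instance] vietTop

section Vietoris

variable {X : Type*} [TopologicalSpace X]

theorem isOpen_vietTop_inter_nonempty {U : Set X} (hU : IsOpen U) :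
    IsOpen {F : Closeds X | ((F : Set X) ∩ U).Nonempty} :=
  isOpen_generateFrom_of_mem (.inl ⟨U, hU, rfl⟩)

theorem isOpen_vietTop_subsets {U : Set X} (hU : IsOpen U) :
    IsOpen {F : Closeds X | (F : Set X) ⊆ U} :=
  isOpen_generateFrom_of_mem (.inr ⟨U, hU, rfl⟩)

theorem vietTop_eq_induced_coe : vietTop X = .induced (↑) (TopologicalSpace.vietoris X) := by
  rw [TopologicalSpace.vietoris, induced_generateFrom_eq, vietTop, image_union, image_image,
    image_image, union_comm]
  congr 2 <;> ext S <;> simp [lowerSets, upperSets, eq_comm, powerset]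

def TopologicalSpace.Closeds.toCompacts [CompactSpace X] (F : Closeds X) : Compacts X :=
  ⟨F, F.isClosed.isCompact⟩

theorem TopologicalSpace.Closeds.isEmbedding_toCompacts [CompactSpace X] :
    IsEmbedding (Closeds.toCompacts (X := X)) :=
  ⟨⟨by rw [vietTop_eq_induced_coe, Compacts.topology, induced_compose]; rfl⟩,
    fun _ _ h => Closeds.ext (congrArg (fun K : Compacts X => (K : Set X)) h)⟩

theorem compactSpace_vietTop [CompactSpace X] [T2Space X] : CompactSpace (Closeds X) := by
  have hsurj : Function.Surjective (Closeds.toCompacts (X := X)) :=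
    fun K => ⟨K.toCloseds, rfl⟩
  rw [← isCompact_univ_iff, Closeds.isEmbedding_toCompacts.isCompact_iff, image_univ,
    hsurj.range_eq]
  exact isCompact_univ

theorem t2Space_vietTop [CompactSpace X] [T2Space X] : T2Space (Closeds X) :=
  Closeds.isEmbedding_toCompacts.t2Space

theorem isClosed_vietTop_setOf_forall_mem_image {Y : Type*} [TopologicalSpace Y] [T2Space Y]
    [CompactSpace X] {g : X → Y} (hg : Continuous g) {f : X × X → Y} (hf : Continuous f) :
    IsClosed {F : Closeds X | ∀ a ∈ F, ∀ b ∈ F, f (a, b) ∈ g '' F} := by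
  rw [← isOpen_compl_iff, isOpen_iff_forall_mem_open]
  intro F hF
  simp only [mem_compl_iff, mem_ofPred_eq, not_forall] at hF
  obtain ⟨a, ha, b, hb, hab⟩ := hF
  obtain ⟨u, v, hu, hv, hfu, hgv, huv⟩ := SeparatedNhds.of_isCompact_isCompact isCompact_singleton
    (F.isClosed.isCompact.image hg) (disjoint_singleton_left.2 hab)
  obtain ⟨A, B, hA, hB, haA, hbB, hAB⟩ := isOpen_prod_iff.1 (hu.preimage hf) a b (hfu rfl)
  refine ⟨{G | ((G : Set X) ∩ A).Nonempty} ∩ {G | ((G : Set X) ∩ B).Nonempty} ∩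
    {G | (G : Set X) ⊆ g ⁻¹' v}, ?_, ?_,
    ⟨⟨⟨a, ha, haA⟩, ⟨b, hb, hbB⟩⟩, fun x hx => hgv (mem_image_of_mem g hx)⟩⟩
  · rintro G ⟨⟨⟨a', ha'G, ha'A⟩, ⟨b', hb'G, hb'B⟩⟩, hGv⟩ hG
    obtain ⟨c, hcG, hc⟩ := hG a' ha'G b' hb'G
    exact huv.le_bot ⟨hAB (mk_mem_prod ha'A hb'B), hc ▸ hGv hcG⟩
  · exact ((isOpen_vietTop_inter_nonempty hA).inter (isOpen_vietTop_inter_nonempty hB)).inter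
      (isOpen_vietTop_subsets (hv.preimage hg))

theorem isClosed_setOf_convex_image {Y : Type*} [AddCommMonoid Y] [SMul ℝ Y] [TopologicalSpace Y]
    [T2Space Y] [ContinuousAdd Y] [ContinuousConstSMul ℝ Y] [CompactSpace X] {g : X → Y}
    (hg : Continuous g) : IsClosed {F : Closeds X | Convex ℝ (g '' F)} := by
  have hclosed (s t : ℝ) :
      IsClosed {F : Closeds X | ∀ a ∈ F, ∀ b ∈ F, s • g a + t • g b ∈ g '' F} :=
    isClosed_vietTop_setOf_forall_mem_image hg (f := fun p => s • g p.1 + t • g p.2) (by fun_prop)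
  have hconvex : {F : Closeds X | Convex ℝ (g '' F)} = ⋂ (s : ℝ) (t : ℝ) (_ : 0 ≤ s) (_ : 0 ≤ t)
      (_ : s + t = 1), {F : Closeds X | ∀ a ∈ F, ∀ b ∈ F, s • g a + t • g b ∈ g '' F} := by
    ext F
    simp only [Convex, StarConvex, forall_mem_image, mem_ofPred_eq, mem_iInter]
    exact ⟨fun h s t hs ht hst a ha b hb => h ha hb hs ht hst,
      fun h a ha b hb s t hs ht hst => h s t hs ht hst a ha b hb⟩
  rw [hconvex]
  exact isClosed_iInter fun s => isClosed_iInter fun t => isClosed_iInter fun _ =>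
    isClosed_iInter fun _ => isClosed_iInter fun _ => hclosed s t

theorem isClosed_setOf_balanced_image {𝕜 Y : Type*} [SeminormedRing 𝕜] [SMul 𝕜 Y]
    [TopologicalSpace Y] [T2Space Y] [ContinuousConstSMul 𝕜 Y] [CompactSpace X] {g : X → Y}
    (hg : Continuous g) : IsClosed {F : Closeds X | Balanced 𝕜 (g '' F)} := by
  have hclosed (c : 𝕜) : IsClosed {F : Closeds X | ∀ a ∈ F, c • g a ∈ g '' F} := by
    convert isClosed_vietTop_setOf_forall_mem_image hg (f := fun p => c • g p.1) (by fun_prop)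
      using 1
    ext F
    exact ⟨fun h a ha _ _ => h a ha, fun h a ha => h a ha a ha⟩
  have hbalanced : {F : Closeds X | Balanced 𝕜 (g '' F)} =
      ⋂ (c : 𝕜) (_ : ‖c‖ ≤ 1), {F : Closeds X | ∀ a ∈ F, c • g a ∈ g '' F} := by
    ext F
    simp only [balanced_iff_smul_mem, forall_mem_image, mem_ofPred_eq, mem_iInter]
    rfl
  rw [hbalanced]
  exact isClosed_biInter fun c _ => hclosed c

end Vietoris

variable (E : Type*) [NormedAddCommGroup E] [NormedSpace ℂ E]

/-- The set `F_conv^bal((E*)_1)` of weak-* closed, convex, balanced subsets of `(E*)_1`,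
viewed inside the closed subsets of `(E*)_1`. -/
def FconvBal : Set (Closeds (dualBall E)) :=
  {F : Closeds (dualBall E) |
    Convex ℝ (Subtype.val '' (F : Set (dualBall E))) ∧
    Balanced ℂ (Subtype.val '' (F : Set (dualBall E)))}

theorem isCompact_dualBall : IsCompact (dualBall E) := by
  have hball : dualBall E = WeakDual.toStrongDual ⁻¹' Metric.closedBall 0 1 := by
    ext ω
    simp only [dualBall, mem_ofPred_eq, mem_preimage, Metric.mem_closedBall, dist_zero_right,
      ContinuousLinearMap.opNorm_le_iff zero_le_one, one_mul]
    rfl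
  rw [hball]
  exact WeakDual.isCompact_closedBall 0 1

instance inst_s6 : CompactSpace (dualBall E) :=
  isCompact_iff_compactSpace.mp (isCompact_dualBall E)

/-- `F_conv^bal((E*)_1)` is closed in `F((E*)_1)` for the Vietoris topology; consequently it is
a compact Hausdorff space for the induced Vietoris topology. -/
theorem isClosed_and_compactSpace_and_t2Space_FconvBal :
    @IsClosed (Closeds (dualBall E)) (vietTop (dualBall E)) (FconvBal E) ∧
    @CompactSpace (FconvBal E) (TopologicalSpace.induced Subtype.val (vietTop (dualBall E))) ∧
    @T2Space (FconvBal E) (TopologicalSpace.induced Subtype.val (vietTop (dualBall E))) := by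
  have hclosed : IsClosed (FconvBal E) :=
    (isClosed_setOf_convex_image continuous_subtype_val).inter
      (isClosed_setOf_balanced_image continuous_subtype_val)
  have := compactSpace_vietTop (X := dualBall E)
  have := t2Space_vietTop (X := dualBall E)
  exact ⟨hclosed, isCompact_iff_compactSpace.mp hclosed.isCompact, inferInstance⟩
end

section
/- Let E be a normed complex vector space, let (V_i)_{i ∈ I} be a net of weak-* closed linear subspaces of E*, and let V be a weak-* closed linear subspace of E*. Then the following are equivalent: (i) the closed unit balls (V_i)_1 converge to (V)_1 in the Vietoris topology on closed subsets of (E*)_1; (ii) for every x ∈ E, sup_{ω ∈ (V_i)_1} |ω(x)| converges to sup_{ω ∈ (V)_1} |ω(x)|. -/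
/-!
For fixed `x`, the map `F ↦ sup_{ω ∈ F} |ω x|` is upper semicontinuous for the upper Vietoris
topology and lower semicontinuous for the lower topology, which gives (i) ⇒ (ii).

For (ii) ⇒ (i), upper convergence: a point `σ ∉ W` of `(E*)_1` is separated from the weak-* closed
`W` by some `x ∈ E` annihilating `W` with `σ x ≠ 0`; as `sup_{(V_i)_1} |ω x| → 0`, the balls
`(V_i)_1` eventually avoid a neighbourhood of `σ`, and the complement of an open `U ⊇ (W)_1` is
compact. Lower convergence is tested on the images `K_i ⊆ ℂ^s` of `(V_i)_1` under evaluation at a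
finite set `s ⊆ E`. These are compact convex sets whose support functions,
`c ↦ sup_{(V_i)_1} |ω (∑ c̄ₓ x)|` since `(V_i)_1` is balanced, are equi-Lipschitz and hence converge
uniformly on bounded sets. If the image `z` of `ω ∈ (W)_1` stayed `ε`-far from `K_i`, the
nearest-point projection `u` of `z` onto `K_i` would give a direction `c = z - u` in which the
support function of `K_i` lies `‖c‖² ≥ ε²` below that of `(W)_1`.
-/

open TopologicalSpace Set Filter

variable (E : Type*) [NormedAddCommGroup E] [NormedSpace ℂ E]

/-- The closed unit ball `(V)_1 = V ∩ (E*)_1` of a weak-* closed subspace `V` of `E*`, as a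
closed subset of `(E*)_1`. -/
def unitBallCloseds (V : Submodule ℂ (WeakDual ℂ E))
    (hV : IsClosed (V : Set (WeakDual ℂ E))) : Closeds (dualBall E) :=
  ⟨Subtype.val ⁻¹' (V : Set (WeakDual ℂ E)), hV.preimage continuous_subtype_val⟩

/-- `sup_{ω ∈ (V)_1} |ω x|`, i.e. the norm of `⟨·, x⟩` restricted to `V`. -/
noncomputable def ballSup (V : Submodule ℂ (WeakDual ℂ E)) (x : E) : ℝ :=
  sSup ((fun ω : WeakDual ℂ E => ‖ω x‖) '' ((V : Set (WeakDual ℂ E)) ∩ dualBall E))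

open Topology

section Hilbert

variable {H : Type*} [NormedAddCommGroup H] [InnerProductSpace ℝ H]

theorem exists_inner_add_norm_sq_le {K : Set H} (hKc : IsComplete K) (hK : Convex ℝ K)
    (hne : K.Nonempty) (z : H) :
    ∃ u ∈ K, ∀ w ∈ K, inner ℝ (z - u) w + ‖z - u‖ ^ 2 ≤ inner ℝ (z - u) z := by
  obtain ⟨u, hu, hmin⟩ := exists_norm_eq_iInf_of_complete_convex hne hKc hK z
  refine ⟨u, hu, fun w hw => ?_⟩
  have hproj := (norm_eq_iInf_iff_real_inner_le_zero hK hu).1 hmin w hw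
  have hsq : ‖z - u‖ ^ 2 = inner ℝ (z - u) z - inner ℝ (z - u) u := by
    rw [← real_inner_self_eq_norm_sq, inner_sub_right]
  rw [inner_sub_right] at hproj
  linarith

theorem eventually_exists_dist_lt_of_tendstoUniformlyOn {ι : Type*} {l : Filter ι}
    {K : ι → Set H} {h : ι → H → ℝ} {h₀ : H → ℝ} {z : H} {R ε : ℝ}
    (hKc : ∀ i, IsComplete (K i)) (hK : ∀ i, Convex ℝ (K i))
    (hne : ∀ i, (K i).Nonempty) (hKR : ∀ i, K i ⊆ Metric.closedBall z R)
    (hh : ∀ i c, IsLUB ((inner ℝ c ·) '' K i) (h i c)) (hz : ∀ c, inner ℝ c z ≤ h₀ c)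
    (hunif : TendstoUniformlyOn h h₀ l (Metric.closedBall 0 R)) (hε : 0 < ε) :
    ∀ᶠ i in l, ∃ w ∈ K i, dist z w < ε := by
  filter_upwards [Metric.tendstoUniformlyOn_iff.1 hunif (ε ^ 2) (by positivity)] with i hi
  by_contra! hfar
  obtain ⟨u, hu, hsep⟩ := exists_inner_add_norm_sq_le (hKc i) (hK i) (hne i) z
  have hc : z - u ∈ Metric.closedBall 0 R := by
    simpa [dist_eq_norm, norm_sub_rev] using hKR i hu
  have hεc : ε ^ 2 ≤ ‖z - u‖ ^ 2 := by
    gcongr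
    simpa [dist_eq_norm] using hfar u hu
  have hsupp : h i (z - u) ≤ inner ℝ (z - u) z - ‖z - u‖ ^ 2 :=
    (hh i (z - u)).2 <| forall_mem_image.2 fun w hw => by linarith [hsep w hw]
  have hclose := hi (z - u) hc
  rw [Real.dist_eq, abs_lt] at hclose
  linarith [hz (z - u)]

end Hilbert

theorem tendstoUniformlyOn_of_lipschitzWith {ι X Y : Type*} [PseudoMetricSpace X]
    [PseudoMetricSpace Y] {l : Filter ι} {F : ι → X → Y} {f : X → Y} {K : NNReal} {S : Set X}
    (hF : ∀ i, LipschitzWith K (F i)) (hf : ∀ x, Tendsto (F · x) l (𝓝 (f x)))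
    (hS : IsCompact S) : TendstoUniformlyOn F f l S := by
  have heq : ∀ T ∈ ({S} : Set (Set X)), EquicontinuousOn F T := fun T _ =>
    (LipschitzWith.uniformEquicontinuous F K hF).equicontinuous.equicontinuousOn T
  have := (EquicontinuousOn.tendsto_uniformOnFun_iff_pi' (by simpa using hS) heq l f).2
    (tendsto_pi_nhds.2 fun x => hf x)
  exact (UniformOnFun.tendsto_iff_tendstoUniformlyOn.1 this) S rfl

theorem tendsto_vietTop_iff {X α : Type*} [TopologicalSpace X] {l : Filter α}
    {F : α → Closeds X} {F₀ : Closeds X} :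
    Tendsto F l (@nhds _ (vietTop X) F₀) ↔
      (∀ U, IsOpen U → ((F₀ : Set X) ∩ U).Nonempty → ∀ᶠ a in l, ((F a : Set X) ∩ U).Nonempty) ∧
        ∀ U, IsOpen U → (F₀ : Set X) ⊆ U → ∀ᶠ a in l, (F a : Set X) ⊆ U := by
  rw [vietTop, tendsto_nhds_generateFrom_iff]
  refine ⟨fun h => ⟨fun U hU => h _ (Or.inl ⟨U, hU, rfl⟩), fun U hU => h _ (Or.inr ⟨U, hU, rfl⟩)⟩,
    ?_⟩
  rintro ⟨hlower, hupper⟩ S (⟨U, hU, rfl⟩ | ⟨U, hU, rfl⟩)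
  exacts [hlower U hU, hupper U hU]

namespace WeakDual

variable {E}

@[simp]
theorem zero_apply (x : E) : (0 : WeakDual ℂ E) x = 0 := rfl

@[simp]
theorem smul_apply (c : ℂ) (ω : WeakDual ℂ E) (x : E) : (c • ω) x = c * ω x := rfl

end WeakDual

namespace VietorisDualBall

variable {E}

theorem isCompact_dualBall : IsCompact (dualBall E) := by
  have : dualBall E = WeakDual.toStrongDual ⁻¹' Metric.closedBall (0 : StrongDual ℂ E) 1 := by
    ext ω
    simp [dualBall, ContinuousLinearMap.opNorm_le_iff zero_le_one]
  rw [this]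
  exact WeakDual.isCompact_closedBall 0 1

theorem convex_dualBall : Convex ℝ (dualBall E) := by
  intro φ hφ ψ hψ a b ha hb hab x
  calc ‖(a • φ + b • ψ) x‖ = ‖(a : ℂ) * φ x + (b : ℂ) * ψ x‖ := rfl
    _ ≤ a * ‖x‖ + b * ‖x‖ := by
      refine (norm_add_le _ _).trans ?_
      simp only [norm_mul, Complex.norm_real, Real.norm_of_nonneg ha, Real.norm_of_nonneg hb]
      gcongr
      exacts [hφ x, hψ x]
    _ = ‖x‖ := by rw [← add_mul, hab, one_mul]

theorem convex_inter_dualBall (V : Submodule ℂ (WeakDual ℂ E)) :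
    Convex ℝ ((V : Set (WeakDual ℂ E)) ∩ dualBall E) :=
  Convex.inter
    (fun _ hφ _ hψ a b _ _ _ => V.add_mem (V.smul_mem (a : ℂ) hφ) (V.smul_mem (b : ℂ) hψ))
    convex_dualBall

theorem zero_mem_dualBall : (0 : WeakDual ℂ E) ∈ dualBall E := fun x => by simp

theorem continuous_norm_apply (x : E) : Continuous fun η : dualBall E => ‖(η : WeakDual ℂ E) x‖ :=
  ((WeakDual.eval_continuous x).comp continuous_subtype_val).norm

theorem isLUB_ballSup (V : Submodule ℂ (WeakDual ℂ E)) (x : E) :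
    IsLUB ((fun ω : WeakDual ℂ E => ‖ω x‖) '' ((V : Set (WeakDual ℂ E)) ∩ dualBall E))
      (ballSup E V x) :=
  isLUB_csSup ⟨_, 0, ⟨V.zero_mem, zero_mem_dualBall⟩, rfl⟩
    ⟨‖x‖, forall_mem_image.2 fun _ hω => hω.2 x⟩

theorem norm_apply_le_ballSup {V : Submodule ℂ (WeakDual ℂ E)} {ω : WeakDual ℂ E}
    (hω : ω ∈ (V : Set (WeakDual ℂ E)) ∩ dualBall E) (x : E) : ‖ω x‖ ≤ ballSup E V x :=
  (isLUB_ballSup V x).1 ⟨ω, hω, rfl⟩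

theorem ballSup_le {V : Submodule ℂ (WeakDual ℂ E)} {x : E} {a : ℝ}
    (h : ∀ ω ∈ (V : Set (WeakDual ℂ E)) ∩ dualBall E, ‖ω x‖ ≤ a) : ballSup E V x ≤ a :=
  (isLUB_ballSup V x).2 (forall_mem_image.2 h)

theorem ballSup_eq_zero {V : Submodule ℂ (WeakDual ℂ E)} {x : E} (h : ∀ ω ∈ V, ω x = 0) :
    ballSup E V x = 0 :=
  le_antisymm (ballSup_le fun ω hω => by simp [h ω hω.1])
    (by simpa using norm_apply_le_ballSup ⟨V.zero_mem, zero_mem_dualBall⟩ x)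

theorem lipschitzWith_ballSup (V : Submodule ℂ (WeakDual ℂ E)) : LipschitzWith 1 (ballSup E V) :=
  LipschitzWith.of_le_add_mul 1 fun x y => ballSup_le fun ω hω => calc
    ‖ω x‖ ≤ ‖ω y‖ + ‖ω (x - y)‖ := by simpa using norm_add_le (ω y) (ω (x - y))
    _ ≤ ballSup E V y + 1 * dist x y := by
      rw [one_mul, dist_eq_norm]
      exact add_le_add (norm_apply_le_ballSup hω y) (hω.2 _)

theorem isLUB_re_ballSup (V : Submodule ℂ (WeakDual ℂ E)) (x : E) :
    IsLUB ((fun ω : WeakDual ℂ E => (ω x).re) '' ((V : Set (WeakDual ℂ E)) ∩ dualBall E))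
      (ballSup E V x) := by
  refine ⟨forall_mem_image.2 fun ω hω =>
    (Complex.re_le_norm _).trans (norm_apply_le_ballSup hω x), fun a ha => ballSup_le ?_⟩
  intro ω hω
  obtain ⟨c, hc, hcx⟩ := Complex.exists_norm_eq_mul_self (ω x)
  have hmem : c • ω ∈ (V : Set (WeakDual ℂ E)) ∩ dualBall E :=
    ⟨V.smul_mem c hω.1, fun y => by simpa [hc] using hω.2 y⟩
  simpa [← hcx] using ha ⟨c • ω, hmem, rfl⟩

noncomputable def evalFinset (s : Finset E) : WeakDual ℂ E →ₗ[ℂ] EuclideanSpace ℂ s where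
  toFun ω := WithLp.toLp 2 fun x => ω x
  map_add' _ _ := rfl
  map_smul' _ _ := rfl

@[simp]
theorem evalFinset_apply (s : Finset E) (ω : WeakDual ℂ E) (x : s) : evalFinset s ω x = ω x :=
  rfl

theorem continuous_evalFinset (s : Finset E) : Continuous (evalFinset s) :=
  (PiLp.continuous_toLp 2 _).comp (continuous_pi fun x => WeakDual.eval_continuous (x : E))

theorem convex_image_evalFinset (s : Finset E) (V : Submodule ℂ (WeakDual ℂ E)) :
    Convex ℝ (evalFinset s '' ((V : Set (WeakDual ℂ E)) ∩ dualBall E)) := by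
  rintro _ ⟨φ, hφ, rfl⟩ _ ⟨ψ, hψ, rfl⟩ a b ha hb hab
  refine ⟨a • φ + b • ψ, convex_inter_dualBall V hφ hψ ha hb hab, ?_⟩
  ext x
  simp only [evalFinset_apply, PiLp.add_apply, PiLp.smul_apply, Complex.real_smul]
  rfl

def conjCombination (s : Finset E) : EuclideanSpace ℂ s →ₗ[ℝ] E where
  toFun c := ∑ x : s, starRingEnd ℂ (c x) • (x : E)
  map_add' c d := by simp [add_smul, Finset.sum_add_distrib]
  map_smul' r c := by simp [Finset.smul_sum, mul_smul, Complex.coe_smul]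

theorem apply_conjCombination (ω : WeakDual ℂ E) (s : Finset E) (c : EuclideanSpace ℂ s) :
    ω (conjCombination s c) = inner ℂ c (evalFinset s ω) := by
  simp [conjCombination, PiLp.inner_apply, mul_comm]

theorem exists_evalFinset_preimage_ball_subset {ω : WeakDual ℂ E} {U : Set (WeakDual ℂ E)}
    (hU : U ∈ 𝓝 ω) :
    ∃ (s : Finset E) (ε : ℝ), 0 < ε ∧ evalFinset s ⁻¹' Metric.ball (evalFinset s ω) ε ⊆ U := by
  obtain ⟨t, ht, htU⟩ :
      ∃ t ∈ 𝓝 fun x : E => ω x, (fun φ : WeakDual ℂ E => fun x => φ x) ⁻¹' t ⊆ U :=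
    (mem_nhds_induced _ ω U).1 hU
  rw [nhds_pi, Filter.mem_pi] at ht
  obtain ⟨I, hI, u, hu, hIu⟩ := ht
  have hN : ∀ᶠ c in 𝓝 (evalFinset hI.toFinset ω), ∀ x : hI.toFinset, c x ∈ u x :=
    Filter.eventually_all.2 fun x =>
      (PiLp.continuous_apply 2 (fun _ : hI.toFinset => ℂ) x).continuousAt.eventually (hu x)
  obtain ⟨ε, hε, hball⟩ := Metric.mem_nhds_iff.1 hN
  refine ⟨hI.toFinset, ε, hε, fun φ hφ => htU (hIu fun x hx => ?_)⟩
  simpa using hball hφ ⟨x, hI.mem_toFinset.2 hx⟩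

theorem exists_apply_ne_zero_of_notMem {W : Submodule ℂ (WeakDual ℂ E)}
    (hW : IsClosed (W : Set (WeakDual ℂ E))) {ω : WeakDual ℂ E} (hω : ω ∉ W) :
    ∃ x : E, (∀ φ ∈ W, φ x = 0) ∧ ω x ≠ 0 := by
  obtain ⟨s, ε, hε, hsub⟩ := exists_evalFinset_preimage_ball_subset (hW.isOpen_compl.mem_nhds hω)
  set L := W.map (evalFinset s)
  have hωL : evalFinset s ω ∉ L := by
    rintro ⟨φ, hφ, hφω⟩
    exact hsub (by simpa [hφω] using hε) hφ
  rw [← L.orthogonal_orthogonal, Submodule.mem_orthogonal] at hωL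
  obtain ⟨c, hc, hcω⟩ := not_forall₂.1 hωL
  refine ⟨conjCombination s c, fun φ hφ => ?_, ?_⟩
  · rw [apply_conjCombination]
    exact (Submodule.mem_orthogonal' L c).1 hc _ ⟨φ, hφ, rfl⟩
  · rwa [apply_conjCombination]

theorem eventually_exists_dist_evalFinset_lt {ι : Type*} {l : Filter ι}
    {V : ι → Submodule ℂ (WeakDual ℂ E)} (hV : ∀ i, IsClosed (V i : Set (WeakDual ℂ E)))
    {W : Submodule ℂ (WeakDual ℂ E)}
    (h : ∀ x, Tendsto (fun i => ballSup E (V i) x) l (𝓝 (ballSup E W x)))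
    {σ : WeakDual ℂ E} (hσ : σ ∈ (W : Set (WeakDual ℂ E)) ∩ dualBall E) (s : Finset E) {ε : ℝ}
    (hε : 0 < ε) :
    ∀ᶠ i in l, ∃ φ ∈ (V i : Set (WeakDual ℂ E)) ∩ dualBall E,
      dist (evalFinset s σ) (evalFinset s φ) < ε := by
  -- `ℂ^s` as a real inner product space: `⟪c, w⟫_ℝ = re ⟪c, w⟫_ℂ`
  let : InnerProductSpace ℝ (EuclideanSpace ℂ s) := InnerProductSpace.complexToReal
  set T := evalFinset s
  have hre : ∀ c φ, inner ℝ c (T φ) = (φ (conjCombination s c)).re := fun c φ => by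
    rw [apply_conjCombination]; rfl
  obtain ⟨R, hR⟩ :=
    (isCompact_dualBall.image (continuous_evalFinset s)).isBounded.subset_closedBall (T σ)
  have hlim := eventually_exists_dist_lt_of_tendstoUniformlyOn
    (K := fun i => T '' ((V i : Set (WeakDual ℂ E)) ∩ dualBall E))
    (h := fun i c => ballSup E (V i) (conjCombination s c))
    (h₀ := fun c => ballSup E W (conjCombination s c)) (R := R)
    (fun i => ((isCompact_dualBall.inter_left (hV i)).image (continuous_evalFinset s)).isComplete)
    (fun i => convex_image_evalFinset s (V i))
    (fun i => ⟨_, 0, ⟨(V i).zero_mem, zero_mem_dualBall⟩, rfl⟩)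
    (fun i => (image_mono inter_subset_right).trans hR)
    (fun i c => by rw [image_image]; simp_rw [hre]; exact isLUB_re_ballSup (V i) _)
    (fun c => by rw [hre]; exact (Complex.re_le_norm _).trans (norm_apply_le_ballSup hσ _))
    (tendstoUniformlyOn_of_lipschitzWith
      (fun i => (lipschitzWith_ballSup (V i)).comp
        (LinearMap.toContinuousLinearMap (conjCombination s)).lipschitz)
      (fun c => h _) (isCompact_closedBall 0 R))
    hε
  filter_upwards [hlim] with i ⟨_, ⟨φ, hφ, rfl⟩, hdist⟩
  exact ⟨φ, hφ, hdist⟩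

section Convergence

variable {ι : Type*} {l : Filter ι} {V : ι → Submodule ℂ (WeakDual ℂ E)}
  (hV : ∀ i, IsClosed (V i : Set (WeakDual ℂ E))) {W : Submodule ℂ (WeakDual ℂ E)}
  (hW : IsClosed (W : Set (WeakDual ℂ E)))

instance : CompactSpace (dualBall E) :=
  isCompact_iff_compactSpace.1 isCompact_dualBall

theorem tendsto_ballSup_of_tendsto_vietTop
    (hT : Tendsto (fun i => unitBallCloseds E (V i) (hV i)) l
      (@nhds _ (vietTop (dualBall E)) (unitBallCloseds E W hW))) (x : E) :
    Tendsto (fun i => ballSup E (V i) x) l (𝓝 (ballSup E W x)) := by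
  obtain ⟨hlower, hupper⟩ := tendsto_vietTop_iff.1 hT
  refine tendsto_order.2 ⟨fun a ha => ?_, fun b hb => ?_⟩
  · obtain ⟨_, ⟨ω, hω, rfl⟩, haω, -⟩ := (isLUB_ballSup W x).exists_between ha
    filter_upwards [hlower _ (isOpen_lt continuous_const (continuous_norm_apply x))
      ⟨⟨ω, hω.2⟩, hω.1, haω⟩] with i ⟨η, hηV, hη⟩
    exact hη.trans_le (norm_apply_le_ballSup ⟨hηV, η.2⟩ x)
  · obtain ⟨c, hWc, hcb⟩ := exists_between hb
    filter_upwards [hupper _ (isOpen_lt (continuous_norm_apply x) continuous_const)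
      fun η hη => (norm_apply_le_ballSup ⟨hη, η.2⟩ x).trans_lt hWc] with i hi
    exact (ballSup_le fun ω hω => (hi (show ⟨ω, hω.2⟩ ∈ _ from hω.1)).le).trans_lt hcb

theorem eventually_inter_nonempty_of_tendsto_ballSup
    (h : ∀ x, Tendsto (fun i => ballSup E (V i) x) l (𝓝 (ballSup E W x)))
    {U : Set (dualBall E)} (hU : IsOpen U)
    (hWU : ((unitBallCloseds E W hW : Set (dualBall E)) ∩ U).Nonempty) :
    ∀ᶠ i in l, ((unitBallCloseds E (V i) (hV i) : Set (dualBall E)) ∩ U).Nonempty := by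
  obtain ⟨σ, hσW, hσU⟩ := hWU
  obtain ⟨U', hU', rfl⟩ := isOpen_induced_iff.1 hU
  obtain ⟨s, ε, hε, hsub⟩ := exists_evalFinset_preimage_ball_subset (hU'.mem_nhds hσU)
  filter_upwards [eventually_exists_dist_evalFinset_lt hV h ⟨hσW, σ.2⟩ s hε]
    with i ⟨φ, hφ, hdist⟩
  exact ⟨⟨φ, hφ.2⟩, hφ.1, hsub (by rwa [mem_preimage, Metric.mem_ball, dist_comm])⟩

theorem eventually_subset_of_tendsto_ballSup
    (h : ∀ x, Tendsto (fun i => ballSup E (V i) x) l (𝓝 (ballSup E W x)))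
    {U : Set (dualBall E)} (hU : IsOpen U)
    (hWU : (unitBallCloseds E W hW : Set (dualBall E)) ⊆ U) :
    ∀ᶠ i in l, (unitBallCloseds E (V i) (hV i) : Set (dualBall E)) ⊆ U := by
  have hnear : ∀ σ ∈ Uᶜ, ∀ᶠ p in l ×ˢ 𝓝 σ, (p.2 : WeakDual ℂ E) ∉ V p.1 := by
    intro σ hσ
    obtain ⟨x, hxW, hσx⟩ := exists_apply_ne_zero_of_notMem hW fun hσW => hσ (hWU hσW)
    have hpos : 0 < ‖(σ : WeakDual ℂ E) x‖ := norm_pos_iff.2 hσx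
    have hVi : ∀ᶠ i in l, ballSup E (V i) x < ‖(σ : WeakDual ℂ E) x‖ / 2 :=
      (h x).eventually_lt_const (by rw [ballSup_eq_zero hxW]; positivity)
    have hη : ∀ᶠ η : dualBall E in 𝓝 σ, ‖(σ : WeakDual ℂ E) x‖ / 2 < ‖(η : WeakDual ℂ E) x‖ :=
      (continuous_norm_apply x).continuousAt.eventually_const_lt (half_lt_self hpos)
    filter_upwards [hVi.prod_mk hη] with ⟨i, η⟩ ⟨hi, hη⟩ hηV
    exact (hη.trans_le (norm_apply_le_ballSup ⟨hηV, η.2⟩ x)).not_gt hi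
  have hCompl : ∀ᶠ p in l ×ˢ 𝓝ˢ Uᶜ, (p.2 : WeakDual ℂ E) ∉ V p.1 :=
    hU.isClosed_compl.isCompact.mem_prod_nhdsSet_of_forall hnear
  filter_upwards [hCompl.curry] with i hi η hη
  by_contra hηU
  exact hi.self_of_nhdsSet η hηU hη

end Convergence

end VietorisDualBall

open VietorisDualBall

theorem tendsto_vietoris_iff_tendsto_sup
    {ι : Type*} [Preorder ι]
    (V : ι → Submodule ℂ (WeakDual ℂ E))
    (hV : ∀ i, IsClosed ((V i : Set (WeakDual ℂ E))))
    (W : Submodule ℂ (WeakDual ℂ E)) (hW : IsClosed (W : Set (WeakDual ℂ E))) :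
    Tendsto (fun i => unitBallCloseds E (V i) (hV i)) atTop
        (@nhds _ (vietTop (dualBall E)) (unitBallCloseds E W hW)) ↔
      ∀ x : E, Tendsto (fun i => ballSup E (V i) x) atTop (nhds (ballSup E W x)) :=
  ⟨fun hT => tendsto_ballSup_of_tendsto_vietTop hV hW hT, fun h =>
    tendsto_vietTop_iff.2 ⟨fun _ hU => eventually_inter_nonempty_of_tendsto_ballSup hV hW h hU,
      fun _ hU => eventually_subset_of_tendsto_ballSup hV hW h hU⟩⟩
end

section
/- Let (E, ‖·‖) be a normed vector space. Then the set G_{‖·‖}(E) of all norm-closed linear subspaces of E is closed in F*(E) for the Wijsman topology associated to the metric d(u,v) = ‖u − v‖. -/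
open TopologicalSpace Set

/-- Subbasis making each `F ↦ d(x, F)` continuous. -/
def wijsSets (X : Type*) [MetricSpace X] : Set (Set (NClosed X)) :=
  {S : Set (NClosed X) |
    ∃ (x : X) (U : Set ℝ), IsOpen U ∧
      S = (fun F : NClosed X => Metric.infDist x F.1) ⁻¹' U}

/-- The Wijsman topology on `F*(X)`: the coarsest topology making each `F ↦ d(x, F)`
continuous. -/
def wijsTop (X : Type*) [MetricSpace X] : TopologicalSpace (NClosed X) :=
  TopologicalSpace.generateFrom (wijsSets X)

open Metric Topology

/-!
A nonempty closed set `F` is a linear subspace iff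
`d(a • u + b • v, F) ≤ ‖a‖ d(u, F) + ‖b‖ d(v, F)` for all vectors `u, v` and scalars `a, b`.
For a subspace this is the triangle inequality and homogeneity of the quotient norm
`‖u + F‖ = d(u, F)`; conversely, taking `u, v ∈ F` shows `a • u + b • v ∈ F` since `F` is closed.
Each of these inequalities between Wijsman-continuous functions of `F` defines a closed set.
-/

theorem continuous_infDist_wijsTop {X : Type*} [MetricSpace X] (x : X) :
    Continuous[wijsTop X, _] fun F : NClosed X => infDist x F.1 :=
  continuous_def.2 fun U hU => GenerateOpen.basic _ ⟨x, U, hU, rfl⟩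

section

variable {𝕜 E : Type*} [NormedField 𝕜] [SeminormedAddCommGroup E] [NormedSpace 𝕜 E]

theorem Submodule.infDist_smul_add_smul_le (V : Submodule 𝕜 E) (a b : 𝕜) (u v : E) :
    infDist (a • u + b • v) V ≤ ‖a‖ * infDist u V + ‖b‖ * infDist v V := by
  have hnorm : ∀ x : E, infDist x V = ‖V.mkQ x‖ :=
    fun x => (QuotientAddGroup.norm_mk (S := V.toAddSubgroup) x).symm
  simp only [hnorm, map_add, map_smul]
  exact (norm_add_le _ _).trans (add_le_add (norm_smul_le _ _) (norm_smul_le _ _))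

theorem exists_submodule_eq_of_infDist_smul_add_smul_le {s : Set E} (hs : IsClosed s)
    (hne : s.Nonempty)
    (h : ∀ (u v : E) (a b : 𝕜), infDist (a • u + b • v) s ≤ ‖a‖ * infDist u s + ‖b‖ * infDist v s) :
    ∃ V : Submodule 𝕜 E, s = V := by
  have smul_add_smul_mem : ∀ u ∈ s, ∀ v ∈ s, ∀ a b : 𝕜, a • u + b • v ∈ s := by
    intro u hu v hv a b
    refine (hs.mem_iff_infDist_zero hne).2 (le_antisymm ?_ infDist_nonneg)
    simpa [infDist_zero_of_mem hu, infDist_zero_of_mem hv] using h u v a b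
  obtain ⟨x, hx⟩ := hne
  refine ⟨{ carrier := s
            zero_mem' := by simpa using smul_add_smul_mem x hx x hx 0 0
            add_mem' := fun hu hv => by simpa using smul_add_smul_mem _ hu _ hv 1 1
            smul_mem' := fun c u hu => by simpa using smul_add_smul_mem u hu u hu c 0 }, rfl⟩

end

/-- For a normed vector space `(E, ‖·‖)`, the set `G_{‖·‖}(E)` of norm-closed linear subspaces
of `E` is closed in `F*(E)` for the Wijsman topology associated to `d(u, v) = ‖u - v‖`. -/
theorem isClosed_subspaces_wijsman (E : Type*) [NormedAddCommGroup E] [NormedSpace ℂ E] :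
    @IsClosed (NClosed E) (wijsTop E)
      {F : NClosed E | ∃ V : Submodule ℂ E, F.1 = (V : Set E)} := by
  let := wijsTop E
  have hchar : {F : NClosed E | ∃ V : Submodule ℂ E, F.1 = (V : Set E)} =
      ⋂ (u : E) (v : E) (a : ℂ) (b : ℂ), {F : NClosed E |
        infDist (a • u + b • v) F.1 ≤ ‖a‖ * infDist u F.1 + ‖b‖ * infDist v F.1} := by
    ext F
    simp only [mem_ofPred_eq, mem_iInter]
    constructor
    · rintro ⟨V, hV⟩ u v a b
      rw [hV]
      exact V.infDist_smul_add_smul_le a b u v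
    · exact exists_submodule_eq_of_infDist_smul_add_smul_le F.2.1 F.2.2
  rw [hchar]
  exact isClosed_iInter fun u => isClosed_iInter fun v => isClosed_iInter fun a =>
    isClosed_iInter fun b => isClosed_le (continuous_infDist_wijsTop _)
      ((continuous_const.mul (continuous_infDist_wijsTop _)).add
        (continuous_const.mul (continuous_infDist_wijsTop _)))
end

section
/- (Michael's selection theorem) Let (E, ‖·‖) be a normed vector space, let X be a Polish space, and let C ⊆ E be a convex subset which is complete for the metric d(u,v) = ‖u − v‖. Suppose F assigns to each x ∈ X a nonempty convex subset F(x) of C which is closed in C, and that F is lower continuous, i.e., for every open subset U of C the set {x ∈ X : F(x) ∩ U ≠ ∅} is open in X. Then there is a continuous map f : X → C such that f(x) ∈ F(x) for every x ∈ X. -/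
/-!
A lower hemicontinuous `F` with nonempty convex values in a convex set `C` has continuous
`ε`-approximate selections for every `ε > 0`: any point of `F x₀` lies in the `ε`-thickening of
`F x` for all `x` near `x₀`, and a partition of unity glues these local constants inside the
convex sets `C ∩ thickening ε (F x)`. Applying this to `x ↦ F x ∩ ball (f x) ε`, which is again
lower hemicontinuous when `f` is continuous, improves a `2⁻ⁿ`-selection `f` to a
`2⁻ⁿ⁻¹`-selection at uniform distance `< 2 ⋅ 2⁻ⁿ` from `f`. The resulting sequence is uniformly
Cauchy in the complete set `C`, and its continuous limit lies in each closed set `F x`.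
-/

open TopologicalSpace Set Metric Filter Topology

theorem LowerHemicontinuous.image {X Y Z : Type*} [TopologicalSpace X] [TopologicalSpace Y]
    [TopologicalSpace Z] {F : X → Set Y} (hF : LowerHemicontinuous F) {g : Y → Z}
    (hg : Continuous g) : LowerHemicontinuous fun x => g '' F x := by
  rw [lowerHemicontinuous_iff_isOpen_inter_nonempty] at hF ⊢
  intro U hU
  simpa only [image_inter_nonempty_iff] using hF _ (hU.preimage hg)

theorem hasOpenCGraph_ball {X Y : Type*} [TopologicalSpace X] [PseudoMetricSpace Y]
    {f : X → Y} (hf : Continuous f) (ε : ℝ) : HasOpenCGraph fun x => ball (f x) ε :=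
  isOpen_lt (continuous_snd.dist (hf.comp continuous_fst)) continuous_const

section ApproximateSelection

variable {X E : Type*} [TopologicalSpace X] [NormalSpace X] [ParacompactSpace X]
  [NormedAddCommGroup E] [NormedSpace ℝ E] {C : Set E} {F : X → Set E}

theorem exists_continuous_mem_inter_thickening (hC : Convex ℝ C) (hFC : ∀ x, F x ⊆ C)
    (hF : LowerHemicontinuous F) (hne : ∀ x, (F x).Nonempty) (hconv : ∀ x, Convex ℝ (F x))
    {ε : ℝ} (hε : 0 < ε) :
    ∃ g : X → E, Continuous g ∧ ∀ x, g x ∈ C ∩ thickening ε (F x) := by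
  have hlocal : ∀ x₀, ∃ c : E, ∀ᶠ x in 𝓝 x₀, c ∈ C ∩ thickening ε (F x) := by
    intro x₀
    obtain ⟨z, hz⟩ := hne x₀
    refine ⟨z, ?_⟩
    filter_upwards [lowerHemicontinuousAt_iff.1 (hF x₀) _ isOpen_ball ⟨z, hz, mem_ball_self hε⟩]
      with x ⟨w, hwF, hwz⟩
    exact ⟨hFC x₀ hz, mem_thickening_iff.2 ⟨w, hwF, mem_ball'.1 hwz⟩⟩
  obtain ⟨g, hg⟩ := exists_continuous_forall_mem_convex_of_local_const
    (fun x => hC.inter ((hconv x).thickening ε)) hlocal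
  exact ⟨g, g.continuous, hg⟩

theorem exists_continuous_mem_inter_thickening_dist_lt (hC : Convex ℝ C) (hFC : ∀ x, F x ⊆ C)
    (hF : LowerHemicontinuous F) (hconv : ∀ x, Convex ℝ (F x))
    {f : X → E} (hf : Continuous f) {ε : ℝ} (hfF : ∀ x, f x ∈ thickening ε (F x))
    {δ : ℝ} (hδ : 0 < δ) :
    ∃ g : X → E, Continuous g ∧ ∀ x, g x ∈ C ∩ thickening δ (F x) ∧ dist (f x) (g x) < ε + δ := by
  set G : X → Set E := fun x => F x ∩ ball (f x) ε
  have hG : LowerHemicontinuous G := hF.inter_hasOpenCGraph (hasOpenCGraph_ball hf ε)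
  have hGne : ∀ x, (G x).Nonempty := fun x => by
    obtain ⟨z, hzF, hfz⟩ := mem_thickening_iff.1 (hfF x)
    exact ⟨z, hzF, mem_ball'.2 hfz⟩
  obtain ⟨g, hg, hgF⟩ := exists_continuous_mem_inter_thickening hC
    (fun x => inter_subset_left.trans (hFC x)) hG hGne
    (fun x => (hconv x).inter (convex_ball _ _)) hδ
  refine ⟨g, hg, fun x => ?_⟩
  obtain ⟨hgC, hgδ⟩ := hgF x
  obtain ⟨z, ⟨hzF, hzf⟩, hgz⟩ := mem_thickening_iff.1 hgδ
  refine ⟨⟨hgC, mem_thickening_iff.2 ⟨z, hzF, hgz⟩⟩, ?_⟩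
  calc dist (f x) (g x) ≤ dist (f x) z + dist z (g x) := dist_triangle _ _ _
    _ < ε + δ := add_lt_add (mem_ball'.1 hzf) (by rwa [dist_comm])

theorem exists_seq_continuous_mem_inter_thickening (hC : Convex ℝ C) (hFC : ∀ x, F x ⊆ C)
    (hF : LowerHemicontinuous F) (hne : ∀ x, (F x).Nonempty) (hconv : ∀ x, Convex ℝ (F x)) :
    ∃ u : ℕ → X → E, (∀ n, Continuous (u n)) ∧
      (∀ n x, u n x ∈ C ∩ thickening ((1 / 2) ^ n) (F x)) ∧
      ∀ n x, dist (u n x) (u (n + 1) x) ≤ 2 * (1 / 2) ^ n := by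
  set P : ℕ → (X → E) → Prop :=
    fun n f => Continuous f ∧ ∀ x, f x ∈ C ∩ thickening ((1 / 2) ^ n) (F x)
  have hstep : ∀ n f, P n f → ∃ g, P (n + 1) g ∧ ∀ x, dist (f x) (g x) ≤ 2 * (1 / 2) ^ n := by
    rintro n f ⟨hf, hfF⟩
    obtain ⟨g, hg, hgF⟩ := exists_continuous_mem_inter_thickening_dist_lt hC hFC hF hconv hf
      (fun x => (hfF x).2) (δ := (1 / 2) ^ (n + 1)) (by positivity)
    refine ⟨g, ⟨hg, fun x => (hgF x).1⟩, fun x => (hgF x).2.le.trans ?_⟩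
    rw [pow_succ]
    linarith [pow_pos (one_half_pos (α := ℝ)) n]
  obtain ⟨u₀, hu₀⟩ : ∃ u₀, P 0 u₀ := by
    simpa [P] using exists_continuous_mem_inter_thickening hC hFC hF hne hconv one_pos
  choose! next hnext hdist using hstep
  let u : ℕ → X → E := fun n => Nat.rec (motive := fun _ => X → E) u₀ next n
  have hu : ∀ n, P n (u n) := fun n => by
    induction n with
    | zero => exact hu₀
    | succ n ih => exact hnext n _ ih
  exact ⟨u, fun n => (hu n).1, fun n => (hu n).2, fun n => hdist n _ (hu n)⟩

end ApproximateSelection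

theorem exists_continuous_tendsto_of_dist_le_geometric {X E : Type*} [TopologicalSpace X]
    [PseudoMetricSpace E] {C : Set E} (hC : IsComplete C) {u : ℕ → X → E}
    (hu : ∀ n, Continuous (u n)) (huC : ∀ n x, u n x ∈ C) {c r : ℝ} (hr₀ : 0 ≤ r) (hr : r < 1)
    (hdist : ∀ n x, dist (u n x) (u (n + 1) x) ≤ c * r ^ n) :
    ∃ l : X → E, Continuous l ∧ (∀ x, l x ∈ C) ∧ ∀ x, Tendsto (u · x) atTop (𝓝 (l x)) := by
  choose l hlC hlim using fun x =>
    cauchySeq_tendsto_of_isComplete hC (huC · x) (cauchySeq_of_le_geometric r c hr (hdist · x))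
  have hbound : Tendsto (fun n => c * r ^ n / (1 - r)) atTop (𝓝 0) := by
    simpa using ((tendsto_pow_atTop_nhds_zero_of_lt_one hr₀ hr).const_mul c).div_const (1 - r)
  have hunif : TendstoUniformly u l atTop := by
    refine Metric.tendstoUniformly_iff.2 fun ε hε => ?_
    filter_upwards [hbound.eventually (gt_mem_nhds hε)] with n hn x
    rw [dist_comm]
    exact (dist_le_of_le_geometric_of_tendsto r c hr (hdist · x) (hlim x) n).trans_lt hn
  exact ⟨l, hunif.continuous (.of_forall hu), hlC, hlim⟩

theorem mem_closure_of_tendsto_of_mem_thickening {α ι : Type*} [PseudoMetricSpace α]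
    {l : Filter ι} [l.NeBot] {s : Set α} {u : ι → α} {a : α} {ε : ι → ℝ}
    (hu : Tendsto u l (𝓝 a)) (hε : Tendsto ε l (𝓝 0)) (hus : ∀ i, u i ∈ thickening (ε i) s) :
    a ∈ closure s := by
  rw [closure_eq_iInter_cthickening]
  refine mem_iInter₂.2 fun δ hδ => isClosed_cthickening.mem_of_tendsto hu ?_
  filter_upwards [hε.eventually (gt_mem_nhds hδ)] with i hi
  exact thickening_subset_cthickening δ s (thickening_mono hi.le s (hus i))

/-- **Michael's selection theorem.** Let `E` be a normed vector space, `X` a Polish space, and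
`C ⊆ E` a convex subset which is complete for the norm metric. If `F` assigns to each `x ∈ X` a
nonempty convex subset `F x` of `C`, closed in `C`, and `F` is lower continuous (for every open
subset `U` of `C`, the set `{x | F x ∩ U ≠ ∅}` is open in `X`), then `F` admits a continuous
selection `f : X → C` with `f x ∈ F x` for all `x`. -/
theorem michael_selection
    {E : Type*} [NormedAddCommGroup E] [NormedSpace ℝ E]
    {X : Type*} [TopologicalSpace X] [PolishSpace X]
    {C : Set E} (hCconv : Convex ℝ C) (hCcomp : IsComplete C)
    (F : X → Set C)
    (hne : ∀ x, (F x).Nonempty)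
    (hconv : ∀ x, Convex ℝ (Subtype.val '' F x))
    (hclosed : ∀ x, IsClosed (F x))
    (hlow : ∀ U : Set C, IsOpen U → IsOpen {x : X | (F x ∩ U).Nonempty}) :
    ∃ f : X → C, Continuous f ∧ ∀ x : X, f x ∈ F x := by
  -- a compatible metric makes `X` normal and paracompact
  let _ := upgradeIsCompletelyMetrizable X
  have hF : LowerHemicontinuous F := lowerHemicontinuous_iff_isOpen_inter_nonempty.2 hlow
  obtain ⟨u, hu, huF, hdist⟩ := exists_seq_continuous_mem_inter_thickening hCconv
    (fun x => Subtype.coe_image_subset C (F x)) (hF.image continuous_subtype_val)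
    (fun x => (hne x).image _) hconv
  obtain ⟨l, hl, hlC, hlim⟩ := exists_continuous_tendsto_of_dist_le_geometric hCcomp hu
    (fun n x => (huF n x).1) (by norm_num) (by norm_num) hdist
  refine ⟨fun x => ⟨l x, hlC x⟩, hl.subtype_mk _, fun x => ?_⟩
  rw [← (hclosed x).closure_eq, closure_subtype]
  exact mem_closure_of_tendsto_of_mem_thickening (hlim x)
    (tendsto_pow_atTop_nhds_zero_of_lt_one (by norm_num) (by norm_num)) fun n => (huF n x).2
end
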